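/- Let E be a real normed vector space, f a positive natural number, and c > 0, M ≥ 0, K ≥ 0 real constants. Let ε : (Fin f → E) × (Fin f → ℝ) → (Fin f → E) be a function with ‖ε(x, τ)_j‖ ≤ M for all inputs and indices j. For each j ∈ Fin f, let z^j : ℝ → E be a differentiable curve with ‖z^j(t) − z^j(s)‖ ≤ c·M·|t − s| for all s, t ∈ ℝ. Equip the input space with the norm ‖(x, τ)‖ = Σ_j (‖x_j‖ + |τ_j|) and the output space Fin f → E with the sup norm, and let ε_θ : (Fin f → E) × (Fin f → ℝ) → (Fin f → E) be K-Lipschitz. Fix a monotone increasing schedule τ_1 ≤ τ_2 ≤ … ≤ τ_f and an index i ∈ Fin f. Define the diagonal input z^diag = (j ↦ z^j(τ_j)) with time vector τ^diag = (j ↦ τ_j), and the uniform input z^vdm = (j ↦ z^j(τ_i)) with time vector τ_i·1 = (j ↦ τ_i). Then ‖ε_θ(z^diag, τ^diag)_i − ε(z^vdm, τ_i·1)_i‖ ≤ ‖ε_θ(z^vdm, τ_i·1)_i − ε(z^vdm, τ_i·1)_i‖ + K·f·(c·M + 1)·(τ_f − τ_1). In particular, since the noise level is σ_t = c·t, the extra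 error introduced by diagonal denoising is bounded by a constant multiple of the maximum noise level difference |σ_{τ_f} − σ_{τ_1}| = c·(τ_f − τ_1). -/
import Mathlib


/-- Theorem 1 of the paper with explicit constants: the noise-prediction error
of diagonal denoising exceeds the error of standard (uniform-noise) denoising
by at most `K * f * (c * M + 1) * (τ_f - τ_1)`, a constant multiple of the
maximum noise level difference `|σ_{τ_f} - σ_{τ_1}| = c * (τ_f - τ_1)`.

Here `ε` is the (bounded) scaled score function, each per-frame trajectory
`z^j` is `c·M`-Lipschitz in time (Lemma 1), and the learned network `ε_θ` is
`K`-Lipschitz with respect to the sum norm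
`‖(x, τ)‖ = Σ_j (‖x j‖ + |τ j|)` on inputs and the sup norm on outputs; the
Lipschitz hypothesis is written out explicitly in terms of these norms
(the Mathlib `Pi` norm on `Fin f → E` is the sup norm). -/
theorem fifo_diagonal_denoising_error_bound
    {E : Type*} [NormedAddCommGroup E] [NormedSpace ℝ E]
    (f : ℕ) (hf : 0 < f)
    (c M K : ℝ) (hc : 0 < c) (hM : 0 ≤ M) (hK : 0 ≤ K)
    (ε : (Fin f → E) × (Fin f → ℝ) → (Fin f → E))
    (hε : ∀ (x : Fin f → E) (τ : Fin f → ℝ) (j : Fin f), ‖ε (x, τ) j‖ ≤ M)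
    (z : Fin f → ℝ → E)
    (hz : ∀ (j : Fin f) (s t : ℝ), ‖z j t - z j s‖ ≤ c * M * |t - s|)
    (εθ : (Fin f → E) × (Fin f → ℝ) → (Fin f → E))
    (hεθ : ∀ (x y : Fin f → E) (τ σ : Fin f → ℝ),
      ‖εθ (x, τ) - εθ (y, σ)‖ ≤ K * ∑ j, (‖x j - y j‖ + |τ j - σ j|))
    (τ : Fin f → ℝ) (hτ : Monotone τ) (i : Fin f) :
    ‖εθ ((fun j => z j (τ j)), τ) i - ε ((fun j => z j (τ i)), (fun _ => τ i)) i‖ ≤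
      ‖εθ ((fun j => z j (τ i)), (fun _ => τ i)) i -
        ε ((fun j => z j (τ i)), (fun _ => τ i)) i‖ +
      K * f * (c * M + 1) * (τ ⟨f - 1, Nat.sub_lt hf Nat.one_pos⟩ - τ ⟨0, hf⟩) := by
  set lo : Fin f := ⟨0, hf⟩
  set hi : Fin f := ⟨f - 1, Nat.sub_lt hf Nat.one_pos⟩
  have hbound : ∀ j : Fin f, |τ j - τ i| ≤ τ hi - τ lo := by
    intro j
    have h1 : τ lo ≤ τ j := hτ (by exact Fin.mk_le_mk.mpr (Nat.zero_le _))
    have h2 : τ j ≤ τ hi := hτ (by exact Fin.mk_le_mk.mpr (Nat.le_sub_one_of_lt j.isLt))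
    have h3 : τ lo ≤ τ i := hτ (Fin.mk_le_mk.mpr (Nat.zero_le _))
    have h4 : τ i ≤ τ hi := hτ (Fin.mk_le_mk.mpr (Nat.le_sub_one_of_lt i.isLt))
    rw [abs_sub_le_iff]; constructor <;> linarith
  have key : ‖εθ ((fun j => z j (τ j)), τ) i - εθ ((fun j => z j (τ i)), (fun _ => τ i)) i‖ ≤
      K * f * (c * M + 1) * (τ hi - τ lo) := by
    have h1 : ‖εθ ((fun j => z j (τ j)), τ) i - εθ ((fun j => z j (τ i)), (fun _ => τ i)) i‖ ≤
        ‖εθ ((fun j => z j (τ j)), τ) - εθ ((fun j => z j (τ i)), (fun _ => τ i))‖ := by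
      have := norm_le_pi_norm (εθ ((fun j => z j (τ j)), τ) - εθ ((fun j => z j (τ i)), (fun _ => τ i))) i
      simpa using this
    have h2 := hεθ (fun j => z j (τ j)) (fun j => z j (τ i)) τ (fun _ => τ i)
    have h3 : ∑ j, (‖z j (τ j) - z j (τ i)‖ + |τ j - τ i|) ≤
        ∑ _j : Fin f, (c * M + 1) * (τ hi - τ lo) := by
      apply Finset.sum_le_sum
      intro j _
      have h5 := hz j (τ i) (τ j)
      have hb := hbound j
      have hcM : (0:ℝ) ≤ c * M + 1 := by positivity
      have : ‖z j (τ j) - z j (τ i)‖ + |τ j - τ i| ≤ (c * M + 1) * |τ j - τ i| := by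
        nlinarith
      calc ‖z j (τ j) - z j (τ i)‖ + |τ j - τ i| ≤ (c * M + 1) * |τ j - τ i| := this
        _ ≤ (c * M + 1) * (τ hi - τ lo) := mul_le_mul_of_nonneg_left hb hcM
    calc ‖εθ ((fun j => z j (τ j)), τ) i - εθ ((fun j => z j (τ i)), (fun _ => τ i)) i‖
        ≤ K * ∑ j, (‖z j (τ j) - z j (τ i)‖ + |τ j - τ i|) := le_trans h1 h2
      _ ≤ K * ∑ _j : Fin f, (c * M + 1) * (τ hi - τ lo) := by
          exact mul_le_mul_of_nonneg_left h3 hK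
      _ = K * f * (c * M + 1) * (τ hi - τ lo) := by
          rw [Finset.sum_const, Finset.card_univ, Fintype.card_fin]
          rw [nsmul_eq_mul]; ring
  calc ‖εθ ((fun j => z j (τ j)), τ) i - ε ((fun j => z j (τ i)), (fun _ => τ i)) i‖
      ≤ ‖εθ ((fun j => z j (τ j)), τ) i - εθ ((fun j => z j (τ i)), (fun _ => τ i)) i‖ +
        ‖εθ ((fun j => z j (τ i)), (fun _ => τ i)) i - ε ((fun j => z j (τ i)), (fun _ => τ i)) i‖ :=
        norm_sub_le_norm_sub_add_norm_sub _ _ _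
    _ ≤ _ := by linarith [key]
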